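/- Let p be an odd prime. For 0 ≤ t ≤ p²−1 write t = t_0·p + t_1 with 0 ≤ t_0, t_1 ≤ p−1, and for 0 ≤ i ≤ p−1 define X_i : Z_{p²} → Z_{p²} by X_i(t) = p·t_0·t_1 + p·i (mod p²), so each X_i takes values in the p-element set pZ_p = {0, p, 2p, …, (p−1)p}. Then the (p², p, p)-FHS set U = {X_0, …, X_{p−1}} over pZ_p is uniformly distributed (N_U(a) = p² for every a ∈ pZ_p), and consequently U has optimal AHC: A_a(U)/(p²(p−1)) + A_c(U)/(p²−1) = (p³−p)/(p(p²−1)(p−1)). -/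

import Mathlib

open Finset

/-- Periodic Hamming correlation of two FHSs `X, Y : ZMod N → F` at shift `τ`. -/
def Hcorr {N : ℕ} [NeZero N] {F : Type*} [DecidableEq F]
    (X Y : ZMod N → F) (τ : ZMod N) : ℕ :=
  (Finset.univ.filter (fun t => X t = Y (t + τ))).card

/-- `N_X(a)`: number of occurrences of frequency `a` in the FHS `X`. -/
def countFreq {N : ℕ} [NeZero N] {F : Type*} [DecidableEq F]
    (X : ZMod N → F) (a : F) : ℕ :=
  (Finset.univ.filter (fun t => X t = a)).card

/-- `N_U(a)`: total number of occurrences of `a` in the FHS set `U`. -/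
def countFreqSet {N L : ℕ} [NeZero N] {F : Type*} [DecidableEq F]
    (U : Fin L → ZMod N → F) (a : F) : ℕ :=
  ∑ i : Fin L, countFreq (U i) a

/-- `S_a(U)`: sum of all out-of-phase Hamming autocorrelation values. -/
def Sa {N L : ℕ} [NeZero N] {F : Type*} [DecidableEq F]
    (U : Fin L → ZMod N → F) : ℕ :=
  ∑ i : Fin L, ∑ τ ∈ Finset.univ \ {(0 : ZMod N)}, Hcorr (U i) (U i) τ

/-- `S_c(U)`: sum of all Hamming crosscorrelation values (ordered pairs `i ≠ j`). -/
def Sc {N L : ℕ} [NeZero N] {F : Type*} [DecidableEq F]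
    (U : Fin L → ZMod N → F) : ℕ :=
  ∑ i : Fin L, ∑ j ∈ Finset.univ \ {i}, ∑ τ : ZMod N, Hcorr (U i) (U j) τ

/-- Average Hamming autocorrelation `A_a(U) = S_a(U)/(L(N-1))`. -/
def Aa {N L : ℕ} [NeZero N] {F : Type*} [DecidableEq F]
    (U : Fin L → ZMod N → F) : ℚ :=
  (Sa U : ℚ) / ((L : ℚ) * ((N : ℚ) - 1))

/-- Average Hamming crosscorrelation `A_c(U) = S_c(U)/(L(L-1)N)`. -/
def Ac {N L : ℕ} [NeZero N] {F : Type*} [DecidableEq F]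
    (U : Fin L → ZMod N → F) : ℚ :=
  (Sc U : ℚ) / ((L : ℚ) * ((L : ℚ) - 1) * (N : ℚ))

/-- `H_a(U)`: maximum out-of-phase Hamming autocorrelation of the set `U`. -/
def Ha {N L : ℕ} [NeZero N] {F : Type*} [DecidableEq F]
    (U : Fin L → ZMod N → F) : ℕ :=
  Finset.univ.sup fun i => (Finset.univ \ {(0 : ZMod N)}).sup fun τ => Hcorr (U i) (U i) τ

/-- `H_c(U)`: maximum Hamming crosscorrelation of the set `U`. -/
def Hc {N L : ℕ} [NeZero N] {F : Type*} [DecidableEq F]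
    (U : Fin L → ZMod N → F) : ℕ :=
  Finset.univ.sup fun i => (Finset.univ \ {i}).sup fun j =>
    Finset.univ.sup fun τ => Hcorr (U i) (U j) τ

/-- `U` has optimal average Hamming correlation (meets the Peng et al. AHC bound with equality). -/
def optimalAHC {N L : ℕ} [NeZero N] {F : Type*} [Fintype F] [DecidableEq F]
    (U : Fin L → ZMod N → F) : Prop :=
  Aa U / ((N : ℚ) * ((L : ℚ) - 1)) + Ac U / ((N : ℚ) - 1)
    = ((N : ℚ) * L - Fintype.card F) /
      ((Fintype.card F : ℚ) * ((N : ℚ) - 1) * ((L : ℚ) - 1))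

/-- The cyclotomic class `C_r = {α^(Ml+r) : 0 ≤ l ≤ f-1}`. -/
def cycClass {F : Type*} [Monoid F] [DecidableEq F] (α : F) (M f r : ℕ) : Finset F :=
  (Finset.range f).image fun l => α ^ (M * l + r)

/-- The cyclotomic number `(i,j)_M = |(C_i + 1) ∩ C_j|`. -/
def cycNum {F : Type*} [Field F] [DecidableEq F] (α : F) (M f i j : ℕ) : ℕ :=
  (((cycClass α M f i).image fun x => x + 1) ∩ cycClass α M f j).card


/-!
For fixed `t`, `X_i(t) = p (t₀ t₁ + i) mod p²`, and as `i` runs over `0, …, p - 1` this runs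
exactly once through the multiples of `p`; so each of the `p` frequencies occurs `p²` times in `U`.
For any FHS set, `∑_τ H_{X,Y}(τ) = ∑ₐ N_X(a) N_Y(a)`, hence `S_a + S_c + L N = ∑ₐ N_U(a)²`, and
a uniform distribution makes this sum `L N · L N / M`, which is the equality case of the AHC bound.
-/

section Correlation

variable {N L : ℕ} [NeZero N] {F : Type*} [DecidableEq F]

theorem Hcorr_self_zero (X : ZMod N → F) : Hcorr X X 0 = N := by
  simp [Hcorr, ZMod.card]

theorem countFreqSet_eq_sum_card_filter (U : Fin L → ZMod N → F) (a : F) :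
    countFreqSet U a = ∑ t : ZMod N, #{i | U i t = a} := by
  simp only [countFreqSet, countFreq, card_filter]
  exact sum_comm

theorem Aa_div_add_Ac_div (U : Fin L → ZMod N → F) :
    Aa U / ((N : ℚ) * ((L : ℚ) - 1)) + Ac U / ((N : ℚ) - 1)
      = ((Sa U : ℚ) + Sc U) / ((L : ℚ) * ((L : ℚ) - 1) * N * ((N : ℚ) - 1)) := by
  simp only [Aa, Ac, div_div, add_div]
  congr 2
  ring

variable [Fintype F]

theorem sum_countFreq (X : ZMod N → F) : ∑ a, countFreq X a = N := by
  simpa [countFreq, ZMod.card] using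
    (card_eq_sum_card_fiberwise (f := X) (s := univ) (t := univ) fun _ _ => mem_univ _).symm

theorem sum_countFreqSet (U : Fin L → ZMod N → F) : ∑ a, countFreqSet U a = L * N := by
  simp only [countFreqSet]
  rw [sum_comm]
  simp [sum_countFreq]

theorem sum_Hcorr (X Y : ZMod N → F) :
    ∑ τ, Hcorr X Y τ = ∑ a, countFreq X a * countFreq Y a := by
  calc ∑ τ, Hcorr X Y τ
      = ∑ t, ∑ τ : ZMod N, if X t = Y (t + τ) then 1 else 0 := by
        simp only [Hcorr, card_filter]
        exact sum_comm
    _ = ∑ t, countFreq Y (X t) := by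
        refine sum_congr rfl fun t _ => ?_
        simp only [countFreq, card_filter, eq_comm (a := Y _)]
        exact Fintype.sum_equiv (Equiv.addLeft t) _ _ fun _ => rfl
    _ = ∑ a, ∑ t with X t = a, countFreq Y (X t) := (sum_fiberwise _ _ _).symm
    _ = ∑ a, countFreq X a * countFreq Y a := by
        refine sum_congr rfl fun a _ => ?_
        rw [sum_congr rfl fun t ht => by rw [(mem_filter.mp ht).2], sum_const, smul_eq_mul]
        rfl

/-- `L * N` is the in-phase part `∑ᵢ H_{Xᵢ}(0)` of the total correlation
`∑ᵢ ∑ⱼ ∑_τ H_{Xᵢ,Xⱼ}(τ)`. -/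
theorem Sc_add_Sa_add_mul (U : Fin L → ZMod N → F) :
    Sc U + Sa U + L * N = ∑ a, countFreqSet U a ^ 2 := by
  have hrow : ∀ i, ∑ j ∈ univ \ {i}, ∑ τ, Hcorr (U i) (U j) τ
      + (∑ τ ∈ univ \ {0}, Hcorr (U i) (U i) τ + N) = ∑ j, ∑ τ, Hcorr (U i) (U j) τ := by
    intro i
    rw [sum_eq_sum_sdiff_singleton_add (mem_univ i), sum_eq_sum_sdiff_singleton_add
      (mem_univ 0) (fun τ => Hcorr (U i) (U i) τ), Hcorr_self_zero]
  calc Sc U + Sa U + L * N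
      = ∑ i, ∑ j, ∑ τ, Hcorr (U i) (U j) τ := by
        simp only [Sc, Sa, ← hrow, sum_add_distrib, sum_const, card_univ, Fintype.card_fin,
          smul_eq_mul, add_assoc]
    _ = ∑ a, ∑ i, ∑ j, countFreq (U i) a * countFreq (U j) a := by
        simp only [sum_Hcorr]
        exact (sum_congr rfl fun _ _ => sum_comm).trans sum_comm
    _ = ∑ a, countFreqSet U a ^ 2 := by
        simp only [countFreqSet, sq, sum_mul_sum]

theorem sum_countFreqSet_sq_of_two_valued (U : Fin L → ZMod N → F) (c : ℕ)
    (h : ∀ a, countFreqSet U a = 0 ∨ countFreqSet U a = c) :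
    ∑ a, countFreqSet U a ^ 2 = c * (L * N) := by
  rw [← sum_countFreqSet U, mul_sum]
  refine sum_congr rfl fun a _ => ?_
  rcases h a with h | h <;> simp [h, sq]

end Correlation

theorem natCast_mul_eq_natCast_mul_iff {n : ℕ} (hn : n ≠ 0) (a b : ℕ) :
    ((n * a : ℕ) : ZMod (n ^ 2)) = ((n * b : ℕ) : ZMod (n ^ 2)) ↔ (a : ZMod n) = b := by
  rw [ZMod.natCast_eq_natCast_iff, ZMod.natCast_eq_natCast_iff, sq,
    Nat.ModEq.mul_left_cancel_iff' hn]

theorem card_filter_natCast_mul_add_eq {n : ℕ} [NeZero n] (d : ℕ) (a : ZMod (n ^ 2)) :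
    #{i : Fin n | ((n * (d + i) : ℕ) : ZMod (n ^ 2)) = a}
      = if ∃ c : ZMod (n ^ 2), a = (n : ZMod (n ^ 2)) * c then 1 else 0 := by
  split_ifs with ha
  · obtain ⟨c, rfl⟩ := ha
    have hc : (n : ZMod (n ^ 2)) * c = ((n * c.val : ℕ) : ZMod (n ^ 2)) := by simp
    rw [card_eq_one]
    refine ⟨⟨((c.val : ZMod n) - d).val, ZMod.val_lt _⟩, ?_⟩
    ext i
    simp only [mem_filter, mem_univ, true_and, mem_singleton, hc,
      natCast_mul_eq_natCast_mul_iff (NeZero.ne n), Fin.ext_iff]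
    conv_rhs => rw [← ZMod.val_cast_of_lt i.isLt]
    rw [(ZMod.val_injective n).eq_iff, eq_sub_iff_add_eq, Nat.cast_add, add_comm]
  · refine card_eq_zero.mpr (filter_eq_empty_iff.mpr fun i _ hi => ha ⟨d + i, ?_⟩)
    rw [← hi]
    push_cast
    ring

theorem countFreqSet_kumar {p : ℕ} [NeZero p] [NeZero (p ^ 2)]
    {X : Fin p → ZMod (p ^ 2) → ZMod (p ^ 2)}
    (hX : ∀ (i : Fin p) (t : ZMod (p ^ 2)),
      X i t = ((p * (t.val / p) * (t.val % p) + p * (i : ℕ) : ℕ) : ZMod (p ^ 2)))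
    (a : ZMod (p ^ 2)) :
    countFreqSet X a = if ∃ c : ZMod (p ^ 2), a = (p : ZMod (p ^ 2)) * c then p ^ 2 else 0 := by
  have hXt : ∀ i t, X i t = ((p * ((t.val / p) * (t.val % p) + i) : ℕ) : ZMod (p ^ 2)) := by
    intro i t
    rw [hX, mul_add, mul_assoc]
  simp only [countFreqSet_eq_sum_card_filter, hXt, card_filter_natCast_mul_add_eq, sum_const,
    card_univ, ZMod.card, smul_eq_mul]
  split_ifs <;> simp

theorem kumar_FHS_set_optimal_AHC_general {p : ℕ} [NeZero p] [NeZero (p ^ 2)]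
    (X : Fin p → ZMod (p ^ 2) → ZMod (p ^ 2))
    (hX : ∀ (i : Fin p) (t : ZMod (p ^ 2)),
      X i t = ((p * (t.val / p) * (t.val % p) + p * (i : ℕ) : ℕ) : ZMod (p ^ 2))) :
    (∀ a : ZMod (p ^ 2), (∃ c : ZMod (p ^ 2), a = (p : ZMod (p ^ 2)) * c) →
      countFreqSet X a = p ^ 2) ∧
    Aa X / ((p : ℚ) ^ 2 * ((p : ℚ) - 1)) + Ac X / ((p : ℚ) ^ 2 - 1)
      = ((p : ℚ) ^ 3 - (p : ℚ)) / ((p : ℚ) * ((p : ℚ) ^ 2 - 1) * ((p : ℚ) - 1)) := by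
  refine ⟨fun a ha => by rw [countFreqSet_kumar hX, if_pos ha], ?_⟩
  have hcorr : Sc X + Sa X + p * p ^ 2 = p ^ 2 * (p * p ^ 2) := by
    rw [Sc_add_Sa_add_mul, sum_countFreqSet_sq_of_two_valued X (p ^ 2) fun a => ?_]
    rw [countFreqSet_kumar hX]
    split_ifs <;> simp
  have hsum : (Sa X : ℚ) + Sc X = (p : ℚ) ^ 2 * ((p : ℚ) ^ 3 - p) := by
    have := congrArg (Nat.cast : ℕ → ℚ) hcorr
    push_cast at this
    linear_combination this
  have hp2 : (p : ℚ) ^ 2 ≠ 0 := pow_ne_zero 2 (Nat.cast_ne_zero.mpr (NeZero.ne p))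
  have hAHC := Aa_div_add_Ac_div X
  push_cast at hAHC
  rw [hAHC, hsum, show (p : ℚ) * (p - 1) * p ^ 2 * (p ^ 2 - 1)
    = p ^ 2 * (p * (p ^ 2 - 1) * (p - 1)) by ring, mul_div_mul_left _ _ hp2]

/-- Example 8 (Kumar's FHS set) is uniformly distributed, hence has optimal AHC. -/
theorem kumar_FHS_set_optimal_AHC {p : ℕ} [NeZero p] [NeZero (p ^ 2)]
    (hp : p.Prime) (hodd : Odd p)
    (X : Fin p → ZMod (p ^ 2) → ZMod (p ^ 2))
    (hX : ∀ (i : Fin p) (t : ZMod (p ^ 2)),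
      X i t = ((p * (t.val / p) * (t.val % p) + p * (i : ℕ) : ℕ) : ZMod (p ^ 2))) :
    (∀ a : ZMod (p ^ 2), (∃ c : ZMod (p ^ 2), a = (p : ZMod (p ^ 2)) * c) →
      countFreqSet X a = p ^ 2) ∧
    Aa X / ((p : ℚ) ^ 2 * ((p : ℚ) - 1)) + Ac X / ((p : ℚ) ^ 2 - 1)
      = ((p : ℚ) ^ 3 - (p : ℚ)) / ((p : ℚ) * ((p : ℚ) ^ 2 - 1) * ((p : ℚ) - 1)) :=
  kumar_FHS_set_optimal_AHC_general X hX
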